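/- arXiv:2310.03774 — 2 statements merged into one kernel-verified Lean document; each statement's English description precedes it below -/
import Mathlib

section
/- Let u = (u_1,…,u_n) be an admissible control profile of the delayed game with trajectory x_u from x_0 ∈ ℝⁿ, and define y(t) = x_u(t) + ∫_{t−τ}^{t} exp((t−s−τ)Λ)·(∑_{j=1}^n B_j·u_j(s)) ds. Then: (a) y(t) = exp(tΛ)·x_0 + ∫₀ᵗ exp((t−s)Λ)·(∑_{j=1}^n B̂_j·u_j(s)) ds for all t ∈ [0,T], i.e. y coincides on [0,T] with the delay-free trajectory of u from y_0 = x_0; (b) x_u(t_f) = exp(τΛ)·y(T); and (c) for every player i, J_i(u) = (1/d_i)·y(T)ᵀ·L̂_i·y(T) + ∫₀ᵀ r_i·u_i(t)² dt. -/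
open Matrix MeasureTheory
open scoped Matrix

noncomputable section

/-- The matrix exponential of a real `n × n` matrix. -/
def mexp {n : ℕ} (A : Matrix (Fin n) (Fin n) ℝ) : Matrix (Fin n) (Fin n) ℝ :=
  NormedSpace.exp A

/-- An admissible control of the delayed game: a bounded measurable function `u : ℝ → ℝ`
with `u s = 0` for `s < 0`. -/
def AdmissibleD (u : ℝ → ℝ) : Prop :=
  Measurable u ∧ (∃ C, ∀ s, |u s| ≤ C) ∧ ∀ s < 0, u s = 0

/-- An admissible control of the delay-free game: a bounded measurable function. -/
def AdmissibleF (u : ℝ → ℝ) : Prop :=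
  Measurable u ∧ ∃ C, ∀ s, |u s| ≤ C

/-- Data of the differential games of opinion formation: the system matrix `Λ`
(the continuous-time Hegselmann–Krause matrix `Λ = D⁻¹A − I`), the input delay `τ`,
the terminal time `tf`, and for each player `i` the input vector `B i`, the control
weight `r i`, the neighborhood size `d i = |𝒩ᵢ|`, the agent-`i` graph Laplacian `L i`
and the stubbornness coefficient `ω i`. -/
structure GameData (n : ℕ) where
  Λ : Matrix (Fin n) (Fin n) ℝ
  τ : ℝ
  tf : ℝ
  B : Fin n → Fin n → ℝ
  r : Fin n → ℝ
  d : Fin n → ℝ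
  L : Fin n → Matrix (Fin n) (Fin n) ℝ
  ω : Fin n → ℝ

namespace GameData

variable {n : ℕ} (G : GameData n)

/-- The standing hypotheses: `τ ≥ 0`, `t_f > τ`, `rᵢ > 0`, `dᵢ > 0`, each `Lᵢ` symmetric
positive semidefinite, and `ωᵢ ∈ [0,1]`. -/
def Valid : Prop :=
  0 ≤ G.τ ∧ G.τ < G.tf ∧ (∀ i, 0 < G.r i) ∧ (∀ i, 0 < G.d i) ∧
    (∀ i, (G.L i).PosSemidef) ∧ ∀ i, G.ω i ∈ Set.Icc (0 : ℝ) 1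

/-- `T = t_f − τ`. -/
def T : ℝ := G.tf - G.τ

/-- `B̂ᵢ = exp(−τΛ)·Bᵢ`. -/
def Bhat (i : Fin n) : Fin n → ℝ := (mexp ((-G.τ) • G.Λ)).mulVec (G.B i)

/-- `L̂ᵢ = exp(τΛᵀ)·Lᵢ·exp(τΛ)`. -/
def Lhat (i : Fin n) : Matrix (Fin n) (Fin n) ℝ :=
  mexp (G.τ • G.Λᵀ) * G.L i * mexp (G.τ • G.Λ)

/-- `Sᵢ = (1/rᵢ)·B̂ᵢ·B̂ᵢᵀ`. -/
def S (i : Fin n) : Matrix (Fin n) (Fin n) ℝ :=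
  (1 / G.r i) • vecMulVec (G.Bhat i) (G.Bhat i)

/-- The matrix `∫₀ᵗ exp((t−s)Λ)·Sᵢ·exp((T−s)Λᵀ) ds` (entrywise integral). -/
def Phi (T' : ℝ) (i : Fin n) (t : ℝ) : Matrix (Fin n) (Fin n) ℝ :=
  Matrix.of fun a b =>
    ∫ s in (0:ℝ)..t, (mexp ((t - s) • G.Λ) * G.S i * mexp ((T' - s) • G.Λᵀ)) a b

/-- `Ψᵢ = ∫₀ᵀ exp((T−s)Λ)·Sᵢ·exp((T−s)Λᵀ) ds` with `T = t_f − τ`. -/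
def Psi (i : Fin n) : Matrix (Fin n) (Fin n) ℝ := G.Phi G.T i G.T

/-- `H = I + ∑ⱼ (1/dⱼ)·Ψⱼ·L̂ⱼ`. -/
def H : Matrix (Fin n) (Fin n) ℝ :=
  1 + ∑ j : Fin n, (1 / G.d j) • (G.Psi j * G.Lhat j)

/-- `Wᵢ`: the matrix whose `(i,i)` entry is `ωᵢ` and all other entries are `0`. -/
def W (i : Fin n) : Matrix (Fin n) (Fin n) ℝ := Matrix.single i i (G.ω i)

/-- `Ŵᵢ = exp(τΛᵀ)·Wᵢ·exp(τΛ)`. -/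
def What (i : Fin n) : Matrix (Fin n) (Fin n) ℝ :=
  mexp (G.τ • G.Λᵀ) * G.W i * mexp (G.τ • G.Λ)

/-- `Ĥ = I + ∑ⱼ Ψⱼ·(Ŵⱼ + ((1−ωⱼ)/dⱼ)·L̂ⱼ)`. -/
def Hhat : Matrix (Fin n) (Fin n) ℝ :=
  1 + ∑ j : Fin n, G.Psi j * (G.What j + ((1 - G.ω j) / G.d j) • G.Lhat j)

/-- The trajectory of the delayed game:
`x_u(t) = exp(tΛ)·x₀ + ∫₀ᵗ exp((t−s)Λ)·(∑ⱼ Bⱼ·uⱼ(s−τ)) ds`. -/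
def xtraj (x0 : Fin n → ℝ) (u : Fin n → ℝ → ℝ) (t : ℝ) : Fin n → ℝ :=
  (mexp (t • G.Λ)).mulVec x0 +
    ∫ s in (0:ℝ)..t, (mexp ((t - s) • G.Λ)).mulVec (∑ j : Fin n, u j (s - G.τ) • G.B j)

/-- The trajectory of the delay-free game:
`y_u(t) = exp(tΛ)·y₀ + ∫₀ᵗ exp((t−s)Λ)·(∑ⱼ B̂ⱼ·uⱼ(s)) ds`. -/
def ytraj (y0 : Fin n → ℝ) (u : Fin n → ℝ → ℝ) (t : ℝ) : Fin n → ℝ :=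
  (mexp (t • G.Λ)).mulVec y0 +
    ∫ s in (0:ℝ)..t, (mexp ((t - s) • G.Λ)).mulVec (∑ j : Fin n, u j s • G.Bhat j)

/-- Player `i`'s cost in the delayed game:
`Jᵢ(u) = (1/dᵢ)·x_u(t_f)ᵀ·Lᵢ·x_u(t_f) + ∫₀^{t_f} rᵢ·uᵢ(t−τ)² dt`. -/
def J (x0 : Fin n → ℝ) (i : Fin n) (u : Fin n → ℝ → ℝ) : ℝ :=
  (1 / G.d i) * (G.xtraj x0 u G.tf ⬝ᵥ (G.L i).mulVec (G.xtraj x0 u G.tf)) +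
    ∫ t in (0:ℝ)..G.tf, G.r i * u i (t - G.τ) ^ 2

/-- Player `i`'s cost in the delay-free game:
`Ĵᵢ(u) = (1/dᵢ)·y_u(T)ᵀ·L̂ᵢ·y_u(T) + ∫₀ᵀ rᵢ·uᵢ(t)² dt`. -/
def JF (y0 : Fin n → ℝ) (i : Fin n) (u : Fin n → ℝ → ℝ) : ℝ :=
  (1 / G.d i) * (G.ytraj y0 u G.T ⬝ᵥ (G.Lhat i).mulVec (G.ytraj y0 u G.T)) +
    ∫ t in (0:ℝ)..G.T, G.r i * u i t ^ 2

/-- Player `i`'s stubborn cost in the delayed game. -/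
def Jstub (x0 : Fin n → ℝ) (i : Fin n) (u : Fin n → ℝ → ℝ) : ℝ :=
  (G.xtraj x0 u G.tf - x0) ⬝ᵥ (G.W i).mulVec (G.xtraj x0 u G.tf - x0) +
    ((1 - G.ω i) / G.d i) * (G.xtraj x0 u G.tf ⬝ᵥ (G.L i).mulVec (G.xtraj x0 u G.tf)) +
    ∫ t in (0:ℝ)..G.tf, G.r i * u i (t - G.τ) ^ 2

/-- Player `i`'s stubborn cost in the delay-free game, with reference opinion `x₀`. -/
def JstubF (x0 y0 : Fin n → ℝ) (i : Fin n) (u : Fin n → ℝ → ℝ) : ℝ :=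
  ((mexp (G.τ • G.Λ)).mulVec (G.ytraj y0 u G.T) - x0) ⬝ᵥ
      (G.W i).mulVec ((mexp (G.τ • G.Λ)).mulVec (G.ytraj y0 u G.T) - x0) +
    ((1 - G.ω i) / G.d i) * (G.ytraj y0 u G.T ⬝ᵥ (G.Lhat i).mulVec (G.ytraj y0 u G.T)) +
    ∫ t in (0:ℝ)..G.T, G.r i * u i t ^ 2

/-- Open-loop Nash equilibrium of the delayed game. -/
def NashD (x0 : Fin n → ℝ) (u : Fin n → ℝ → ℝ) : Prop :=
  (∀ i, AdmissibleD (u i)) ∧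
    ∀ i, ∀ v : ℝ → ℝ, AdmissibleD v →
      G.J x0 i u ≤ G.J x0 i (Function.update u i v)

/-- Open-loop Nash equilibrium of the delay-free game. -/
def NashF (y0 : Fin n → ℝ) (u : Fin n → ℝ → ℝ) : Prop :=
  (∀ i, AdmissibleF (u i)) ∧
    ∀ i, ∀ v : ℝ → ℝ, AdmissibleF v →
      G.JF y0 i u ≤ G.JF y0 i (Function.update u i v)

/-- Open-loop Nash equilibrium of the stubborn delayed game. -/
def NashStubD (x0 : Fin n → ℝ) (u : Fin n → ℝ → ℝ) : Prop :=
  (∀ i, AdmissibleD (u i)) ∧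
    ∀ i, ∀ v : ℝ → ℝ, AdmissibleD v →
      G.Jstub x0 i u ≤ G.Jstub x0 i (Function.update u i v)

/-- Open-loop Nash equilibrium of the stubborn delay-free game. -/
def NashStubF (x0 y0 : Fin n → ℝ) (u : Fin n → ℝ → ℝ) : Prop :=
  (∀ i, AdmissibleF (u i)) ∧
    ∀ i, ∀ v : ℝ → ℝ, AdmissibleF v →
      G.JstubF x0 y0 i u ≤ G.JstubF x0 y0 i (Function.update u i v)

end GameData

/-!
Shifting the integration variable by `τ` in the convolution defining `x_u` and using
`u(s) = 0` for `s < 0` gives `x_u(t) = exp(tΛ) x₀ + ∫₀^{t-τ} exp((t-s-τ)Λ) ∑ⱼ Bⱼ uⱼ(s) ds`.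
Adding the integral over `[t-τ, t]` completes it to `∫₀ᵗ exp((t-s)Λ) ∑ⱼ exp(-τΛ) Bⱼ uⱼ(s) ds`,
the delay-free trajectory with input vectors `B̂ⱼ`. At `t_f = τ + T` the group law
`exp((a+b)Λ) = exp(aΛ) exp(bΛ)` pulls `exp(τΛ)` out of the integral, the terminal cost becomes
a quadratic form in `L̂ᵢ`, and the running cost is shifted by the same substitution.
-/

section MatrixExponential

variable {n : ℕ} (Λ : Matrix (Fin n) (Fin n) ℝ)

open scoped Norms.Operator in
theorem continuous_mexp_smul : Continuous fun c : ℝ => mexp (c • Λ) :=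
  NormedSpace.exp_continuous.comp (continuous_id.smul continuous_const)

theorem mexp_add_smul (a b : ℝ) : mexp ((a + b) • Λ) = mexp (a • Λ) * mexp (b • Λ) := by
  rw [mexp, mexp, mexp, add_smul]
  exact Matrix.exp_add_of_commute _ _ (((Commute.refl Λ).smul_left a).smul_right b)

theorem mexp_smul_mulVec_mexp_smul_mulVec (a b : ℝ) (w : Fin n → ℝ) :
    mexp (a • Λ) *ᵥ (mexp (b • Λ) *ᵥ w) = mexp ((a + b) • Λ) *ᵥ w := by
  rw [mexp_add_smul, mulVec_mulVec]

theorem mexp_smul_transpose (c : ℝ) : mexp (c • Λᵀ) = (mexp (c • Λ))ᵀ := by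
  rw [mexp, mexp, ← transpose_smul, exp_transpose]

end MatrixExponential

theorem dotProduct_mulVec_mulVec_mulVec {m k R : Type*} [Fintype m] [Fintype k]
    [CommSemiring R] (A : Matrix m k R) (L : Matrix m m R) (x : k → R) :
    A *ᵥ x ⬝ᵥ L *ᵥ (A *ᵥ x) = x ⬝ᵥ (Aᵀ * L * A) *ᵥ x := by
  rw [← mulVec_mulVec, ← mulVec_mulVec, dotProduct_mulVec x, vecMul_transpose]

theorem Matrix.mulVec_intervalIntegral {m k : Type*} [Fintype m] [Fintype k]
    (A : Matrix m k ℝ) {f : ℝ → k → ℝ} {a b : ℝ} (hf : IntervalIntegrable f volume a b) :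
    A *ᵥ ∫ s in a..b, f s = ∫ s in a..b, A *ᵥ f s := by
  simpa [mulVecLin] using
    ((LinearMap.toContinuousLinearMap A.mulVecLin).intervalIntegral_comp_comm hf).symm

theorem MeasureTheory.LocallyIntegrable.of_bounded {X E : Type*} [MeasurableSpace X]
    [TopologicalSpace X] [NormedAddCommGroup E] {μ : Measure X} [IsLocallyFiniteMeasure μ]
    {g : X → E} (hg : AEStronglyMeasurable g μ) {C : ℝ} (hC : ∀ x, ‖g x‖ ≤ C) :
    LocallyIntegrable g μ :=
  (locallyIntegrable_const C).mono hg
    (ae_of_all _ fun x => (hC x).trans (le_abs_self C))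

theorem MeasureTheory.LocallyIntegrable.intervalIntegrable {E : Type*} [NormedAddCommGroup E]
    {f : ℝ → E} (hf : LocallyIntegrable f) (a b : ℝ) : IntervalIntegrable f volume a b :=
  (hf.integrableOn_isCompact isCompact_uIcc).intervalIntegrable

section Causal

variable {E : Type*} [NormedAddCommGroup E] [NormedSpace ℝ E] {f : ℝ → E}

theorem intervalIntegral_eq_zero_of_forall_neg (hf : ∀ s < 0, f s = 0) {a : ℝ} (ha : a ≤ 0) :
    ∫ s in a..0, f s = 0 := by
  rw [intervalIntegral.integral_of_le ha, integral_Ioc_eq_integral_Ioo]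
  exact setIntegral_eq_zero_of_forall_eq_zero fun s hs => hf s hs.2

theorem intervalIntegral_comp_sub_of_forall_neg (hf : ∀ s < 0, f s = 0)
    (hfi : LocallyIntegrable f) {τ : ℝ} (hτ : 0 ≤ τ) (t : ℝ) :
    ∫ s in (0:ℝ)..t, f (s - τ) = ∫ s in (0:ℝ)..(t - τ), f s := by
  rw [intervalIntegral.integral_comp_sub_right, zero_sub,
    ← intervalIntegral.integral_add_adjacent_intervals (hfi.intervalIntegrable _ _)
      (hfi.intervalIntegrable _ _), intervalIntegral_eq_zero_of_forall_neg hf (neg_nonpos.2 hτ),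
    zero_add]

end Causal

namespace GameData

variable {n : ℕ} (G : GameData n) {u : Fin n → ℝ → ℝ}

theorem locallyIntegrable_delayed_integrand (hu : ∀ i, AdmissibleD (u i)) (t : ℝ) :
    LocallyIntegrable fun s => mexp ((t - s - G.τ) • G.Λ) *ᵥ ∑ j, u j s • G.B j := by
  simp only [mulVec_sum, mulVec_smul]
  refine locallyIntegrable_finsetSum _ fun j _ => ?_
  obtain ⟨hmeas, ⟨C, hC⟩, -⟩ := hu j
  exact (LocallyIntegrable.of_bounded hmeas.aestronglyMeasurable hC).smul_continuous
    (((continuous_mexp_smul G.Λ).comp (by fun_prop)).matrix_mulVec continuous_const)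

theorem ytraj_eq_integral_delayed (x0 : Fin n → ℝ) (t : ℝ) :
    G.ytraj x0 u t = mexp (t • G.Λ) *ᵥ x0 +
      ∫ s in (0:ℝ)..t, mexp ((t - s - G.τ) • G.Λ) *ᵥ ∑ j, u j s • G.B j := by
  rw [ytraj]
  congr 1
  refine intervalIntegral.integral_congr fun s _ => ?_
  simp only [Bhat, mulVec_sum, mulVec_smul, mexp_smul_mulVec_mexp_smul_mulVec, sub_eq_add_neg]

variable {G} (hτ : 0 ≤ G.τ) (hu : ∀ i, AdmissibleD (u i))
include hτ hu

theorem xtraj_eq_integral_delayed (x0 : Fin n → ℝ) (t : ℝ) :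
    G.xtraj x0 u t = mexp (t • G.Λ) *ᵥ x0 +
      ∫ s in (0:ℝ)..(t - G.τ), mexp ((t - s - G.τ) • G.Λ) *ᵥ ∑ j, u j s • G.B j := by
  have hcausal : ∀ s < 0, mexp ((t - s - G.τ) • G.Λ) *ᵥ ∑ j, u j s • G.B j = 0 := by
    intro s hs
    simp [fun j => (hu j).2.2 s hs]
  rw [xtraj, ← intervalIntegral_comp_sub_of_forall_neg hcausal
    (G.locallyIntegrable_delayed_integrand hu t) hτ]
  simp only [sub_sub, sub_add_cancel]

theorem xtraj_add_integral_eq_ytraj (x0 : Fin n → ℝ) (t : ℝ) :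
    G.xtraj x0 u t + ∫ s in (t - G.τ)..t,
        mexp ((t - s - G.τ) • G.Λ) *ᵥ ∑ j, u j s • G.B j = G.ytraj x0 u t := by
  have hloc := G.locallyIntegrable_delayed_integrand hu t
  rw [xtraj_eq_integral_delayed hτ hu, ytraj_eq_integral_delayed, add_assoc,
    intervalIntegral.integral_add_adjacent_intervals (hloc.intervalIntegrable _ _)
      (hloc.intervalIntegrable _ _)]

theorem xtraj_tf_eq (x0 : Fin n → ℝ) :
    G.xtraj x0 u G.tf = mexp (G.τ • G.Λ) *ᵥ G.ytraj x0 u G.T := by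
  have hloc := G.locallyIntegrable_delayed_integrand hu G.T
  have htf : G.tf = G.τ + G.T := by rw [T]; ring
  rw [xtraj_eq_integral_delayed hτ hu, ytraj_eq_integral_delayed, mulVec_add,
    mexp_smul_mulVec_mexp_smul_mulVec, mulVec_intervalIntegral _ (hloc.intervalIntegrable _ _),
    ← htf, show G.tf - G.τ = G.T from rfl]
  congr 1
  refine intervalIntegral.integral_congr fun s _ => ?_
  rw [mexp_smul_mulVec_mexp_smul_mulVec, htf]
  ring_nf

theorem J_eq_JF (x0 : Fin n → ℝ) (i : Fin n) : G.J x0 i u = G.JF x0 i u := by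
  obtain ⟨hmeas, ⟨C, hC⟩, hcausal⟩ := hu i
  have hloc : LocallyIntegrable fun t => G.r i * u i t ^ 2 := by
    refine .of_bounded ((hmeas.pow_const 2).const_mul _).aestronglyMeasurable
      (C := |G.r i| * C ^ 2) fun s => ?_
    rw [Real.norm_eq_abs, abs_mul, abs_pow]
    gcongr
    exact hC s
  rw [J, JF, xtraj_tf_eq hτ hu, dotProduct_mulVec_mulVec_mulVec, ← mexp_smul_transpose,
    intervalIntegral_comp_sub_of_forall_neg (f := fun t => G.r i * u i t ^ 2)
      (fun s hs => by simp [hcausal s hs]) hloc hτ]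
  rfl

end GameData

/-- For an admissible control profile `u` of the delayed game with trajectory `x_u` from
`x₀`, the delay-free transform `y(t) = x_u(t) + ∫_{t−τ}^{t} exp((t−s−τ)Λ)·(∑ⱼ Bⱼ uⱼ(s)) ds`
(a) coincides on `[0,T]` with the delay-free trajectory of `u` from `y₀ = x₀`,
(b) satisfies `x_u(t_f) = exp(τΛ)·y(T)`, and
(c) gives `Jᵢ(u) = (1/dᵢ)·y(T)ᵀ·L̂ᵢ·y(T) + ∫₀ᵀ rᵢ·uᵢ(t)² dt` for every player `i`. -/
theorem statement_3 {n : ℕ} (G : GameData n) (hG : G.Valid) (x0 : Fin n → ℝ)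
    (u : Fin n → ℝ → ℝ) (hu : ∀ i, AdmissibleD (u i)) (y : ℝ → Fin n → ℝ)
    (hy : ∀ t, y t = G.xtraj x0 u t +
      ∫ s in (t - G.τ)..t,
        (mexp ((t - s - G.τ) • G.Λ)).mulVec (∑ j : Fin n, u j s • G.B j)) :
    (∀ t ∈ Set.Icc (0:ℝ) G.T, y t = G.ytraj x0 u t) ∧
      G.xtraj x0 u G.tf = (mexp (G.τ • G.Λ)).mulVec (y G.T) ∧
      ∀ i, G.J x0 i u =
        (1 / G.d i) * (y G.T ⬝ᵥ (G.Lhat i).mulVec (y G.T)) +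
          ∫ t in (0:ℝ)..G.T, G.r i * u i t ^ 2 := by
  have hτ : 0 ≤ G.τ := hG.1
  have hy_eq : ∀ t, y t = G.ytraj x0 u t := fun t =>
    (hy t).trans (GameData.xtraj_add_integral_eq_ytraj hτ hu x0 t)
  refine ⟨fun t _ => hy_eq t, ?_, fun i => ?_⟩
  · rw [hy_eq, GameData.xtraj_tf_eq hτ hu]
  · rw [hy_eq, GameData.J_eq_JF hτ hu, GameData.JF]
end
end

section
/- Let u* = (u*_1,…,u*_n) be an open-loop Nash equilibrium of the delay-free game with trajectory y* = y_{u*} from y_0 ∈ ℝⁿ. Then for every player i, u*_i(t) = −(1/(r_i·d_i))·B̂_iᵀ·exp((T−t)Λᵀ)·L̂_i·y*(T) for almost every t ∈ [0,T]. -/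
open Matrix MeasureTheory
open scoped Matrix

noncomputable section

/-! Replacing player `i`'s control by `uᵢ + ε w` moves the terminal state
affinely, to `y*(T) + ε ∫₀ᵀ w(s) exp((T-s)Λ) B̂ᵢ ds`; since `L̂ᵢ` is symmetric, `Ĵᵢ` becomes a
quadratic polynomial in `ε` whose linear coefficient is `∫₀ᵀ w · gradJF`, where
`gradJF = 2 (rᵢ uᵢ + B̂ᵢᵀ exp((T-t)Λᵀ) L̂ᵢ y*(T) / dᵢ)`. At a Nash equilibrium this polynomial is
minimal at `ε = 0`, so the coefficient vanishes for every bounded measurable `w`; testing against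
indicator functions shows that `gradJF` vanishes almost everywhere on `[0,T]`. -/

section MatrixExp

attribute [local instance] Matrix.linftyOpNormedAddCommGroup Matrix.linftyOpNormedRing
  Matrix.linftyOpNormedAlgebra

theorem continuous_mexp_smul_s9 {n : ℕ} (A : Matrix (Fin n) (Fin n) ℝ) :
    Continuous fun t : ℝ => mexp (t • A) :=
  NormedSpace.exp_continuous.comp (continuous_id.smul continuous_const)

end MatrixExp

theorem mexp_smul_transpose_s9 {n : ℕ} (A : Matrix (Fin n) (Fin n) ℝ) (t : ℝ) :
    (mexp (t • A))ᵀ = mexp (t • Aᵀ) := by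
  rw [mexp, mexp, ← transpose_smul, exp_transpose]

theorem continuous_mexp_sub_smul_mulVec {n : ℕ} (A : Matrix (Fin n) (Fin n) ℝ) (t : ℝ)
    (b : Fin n → ℝ) : Continuous fun s : ℝ => mexp ((t - s) • A) *ᵥ b :=
  ((continuous_mexp_smul_s9 A).comp (continuous_const.sub continuous_id)).matrix_mulVec
    continuous_const

section QuadraticForm

variable {m R : Type*} [Fintype m] [CommRing R] {A : Matrix m m R}

theorem Matrix.IsSymm.dotProduct_mulVec_comm (hA : A.IsSymm) (x y : m → R) :
    x ⬝ᵥ A *ᵥ y = y ⬝ᵥ A *ᵥ x := by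
  rw [dotProduct_mulVec, ← mulVec_transpose, hA.eq, dotProduct_comm]

theorem Matrix.IsSymm.add_smul_dotProduct_mulVec_add_smul (hA : A.IsSymm) (y z : m → R) (ε : R) :
    (y + ε • z) ⬝ᵥ A *ᵥ (y + ε • z) =
      y ⬝ᵥ A *ᵥ y + ε * (2 * (z ⬝ᵥ A *ᵥ y)) + ε ^ 2 * (z ⬝ᵥ A *ᵥ z) := by
  simp only [mulVec_add, mulVec_smul, dotProduct_add, add_dotProduct, dotProduct_smul,
    smul_dotProduct, smul_eq_mul, hA.dotProduct_mulVec_comm y z]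
  ring

end QuadraticForm

theorem intervalIntegral_dotProduct_const {m : Type*} [Fintype m] {f : ℝ → m → ℝ} {a b : ℝ}
    (hf : IntervalIntegrable f volume a b) (q : m → ℝ) :
    ∫ s in a..b, f s ⬝ᵥ q = (∫ s in a..b, f s) ⬝ᵥ q :=
  (LinearMap.toContinuousLinearMap ((dotProductBilin ℝ ℝ).flip q)).intervalIntegral_comp_comm hf

theorem eq_zero_of_forall_mul_add_sq_mul_nonneg {a c : ℝ}
    (h : ∀ ε : ℝ, 0 ≤ ε * a + ε ^ 2 * c) : a = 0 := by
  have hmin : IsLocalMin (fun ε : ℝ => ε * a + ε ^ 2 * c) 0 :=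
    Filter.Eventually.of_forall fun ε => by simpa using h ε
  have hderiv : HasDerivAt (fun ε : ℝ => ε * a + ε ^ 2 * c) a 0 := by
    simpa using ((hasDerivAt_id' (0 : ℝ)).mul_const a).fun_add
      ((hasDerivAt_pow 2 (0 : ℝ)).mul_const c)
  exact hmin.hasDerivAt_eq_zero hderiv

theorem ae_restrict_Icc_eq_zero_of_forall_integral_indicator_mul {g : ℝ → ℝ} {a b : ℝ}
    (hab : a ≤ b) (hg : IntervalIntegrable g volume a b)
    (h : ∀ s, MeasurableSet s → ∫ x in a..b, s.indicator 1 x * g x = 0) :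
    ∀ᵐ x ∂volume.restrict (Set.Icc a b), g x = 0 := by
  rw [← restrict_Ioc_eq_restrict_Icc]
  refine (hg.1 : IntegrableOn g (Set.Ioc a b)).ae_eq_zero_of_forall_setIntegral_eq_zero
    fun s hs _ => ?_
  rw [← integral_indicator hs, ← intervalIntegral.integral_of_le hab, ← h s hs]
  simp only [← Set.indicator_mul_left, Pi.one_apply, one_mul]

namespace AdmissibleF

variable {u v : ℝ → ℝ}

theorem add (hu : AdmissibleF u) (hv : AdmissibleF v) : AdmissibleF (u + v) := by
  obtain ⟨hum, C, hC⟩ := hu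
  obtain ⟨hvm, D, hD⟩ := hv
  exact ⟨hum.add hvm, C + D, fun s => (abs_add_le _ _).trans (add_le_add (hC s) (hD s))⟩

theorem const_smul (hu : AdmissibleF u) (c : ℝ) : AdmissibleF (c • u) := by
  obtain ⟨hum, C, hC⟩ := hu
  refine ⟨hum.const_smul c, |c| * C, fun s => ?_⟩
  rw [Pi.smul_apply, smul_eq_mul, abs_mul]
  exact mul_le_mul_of_nonneg_left (hC s) (abs_nonneg c)

theorem mul (hu : AdmissibleF u) (hv : AdmissibleF v) : AdmissibleF (u * v) := by
  obtain ⟨hum, C, hC⟩ := hu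
  obtain ⟨hvm, D, hD⟩ := hv
  refine ⟨hum.mul hvm, C * D, fun s => ?_⟩
  rw [Pi.mul_apply, abs_mul]
  exact mul_le_mul (hC s) (hD s) (abs_nonneg _) ((abs_nonneg _).trans (hC s))

theorem indicator_one {s : Set ℝ} (hs : MeasurableSet s) : AdmissibleF (s.indicator 1) :=
  ⟨measurable_one.indicator hs, 1, fun x => by
    by_cases hx : x ∈ s <;> simp [Set.indicator_of_mem, Set.indicator_of_notMem, hx]⟩

theorem intervalIntegrable (hu : AdmissibleF u) (a b : ℝ) : IntervalIntegrable u volume a b := by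
  obtain ⟨hum, C, hC⟩ := hu
  rw [intervalIntegrable_iff]
  exact IntegrableOn.of_bound measure_Ioc_lt_top hum.aestronglyMeasurable C
    (Filter.Eventually.of_forall fun s => (Real.norm_eq_abs _).trans_le (hC s))

theorem intervalIntegrable_mul (hu : AdmissibleF u) (hv : AdmissibleF v) (a b : ℝ) :
    IntervalIntegrable (fun t => u t * v t) volume a b :=
  (hu.mul hv).intervalIntegrable a b

end AdmissibleF

namespace GameData

variable {n : ℕ} (G : GameData n)

theorem posSemidef_Lhat {i : Fin n} (hL : (G.L i).PosSemidef) : (G.Lhat i).PosSemidef := by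
  simpa only [Lhat, conjTranspose_eq_transpose_of_trivial, mexp_smul_transpose_s9] using
    hL.conjTranspose_mul_mul_same (mexp (G.τ • G.Λ))

theorem ytraj_update_add_smul (y0 : Fin n → ℝ) {u : Fin n → ℝ → ℝ}
    (hu : ∀ j, AdmissibleF (u j)) (i : Fin n) {w : ℝ → ℝ} (hw : AdmissibleF w) (ε t : ℝ) :
    G.ytraj y0 (Function.update u i (u i + ε • w)) t =
      G.ytraj y0 u t + ε • ∫ s in (0:ℝ)..t, w s • mexp ((t - s) • G.Λ) *ᵥ G.Bhat i := by
  have hmulVec : ∀ (v : Fin n → ℝ → ℝ) s, mexp ((t - s) • G.Λ) *ᵥ ∑ j, v j s • G.Bhat j =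
      ∑ j, v j s • mexp ((t - s) • G.Λ) *ᵥ G.Bhat j := fun v s => by
    simp only [mulVec_sum, mulVec_smul]
  have hint : ∀ {v : ℝ → ℝ}, AdmissibleF v → ∀ j, IntervalIntegrable
      (fun s => v s • mexp ((t - s) • G.Λ) *ᵥ G.Bhat j) volume 0 t := fun hv j =>
    (hv.intervalIntegrable 0 t).smul_continuousOn
      (continuous_mexp_sub_smul_mulVec G.Λ t (G.Bhat j)).continuousOn
  have hsum : ∀ s,
      ∑ j, Function.update u i (u i + ε • w) j s • mexp ((t - s) • G.Λ) *ᵥ G.Bhat j =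
        ∑ j, u j s • mexp ((t - s) • G.Λ) *ᵥ G.Bhat j +
          ε • (w s • mexp ((t - s) • G.Λ) *ᵥ G.Bhat i) := by
    intro s
    have hterm : ∀ j, Function.update u i (u i + ε • w) j s • mexp ((t - s) • G.Λ) *ᵥ G.Bhat j =
        u j s • mexp ((t - s) • G.Λ) *ᵥ G.Bhat j +
          if j = i then ε • (w s • mexp ((t - s) • G.Λ) *ᵥ G.Bhat i) else 0 := by
      intro j
      rcases eq_or_ne j i with rfl | hji
      · simp [add_smul, smul_smul]
      · simp [hji]
    simp only [hterm, Finset.sum_add_distrib, Finset.sum_ite_eq', Finset.mem_univ, if_true]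
  unfold ytraj
  rw [add_assoc, ← intervalIntegral.integral_smul, ← intervalIntegral.integral_add]
  · simp only [hmulVec, hsum]
  · simpa only [hmulVec, ← Finset.sum_fn] using
      IntervalIntegrable.sum Finset.univ fun j _ => hint (hu j) j
  · exact (hint hw i).smul ε

def gradJF (y0 : Fin n → ℝ) (u : Fin n → ℝ → ℝ) (i : Fin n) (t : ℝ) : ℝ :=
  2 * (G.r i * u i t +
    (1 / G.d i) * (G.Bhat i ⬝ᵥ mexp ((G.T - t) • G.Λᵀ) *ᵥ (G.Lhat i *ᵥ G.ytraj y0 u G.T)))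

theorem continuous_Bhat_dotProduct_mexp_mulVec (i : Fin n) (q : Fin n → ℝ) :
    Continuous fun t => G.Bhat i ⬝ᵥ mexp ((G.T - t) • G.Λᵀ) *ᵥ q :=
  continuous_const.dotProduct (continuous_mexp_sub_smul_mulVec G.Λᵀ G.T q)

theorem intervalIntegrable_gradJF (y0 : Fin n → ℝ) {u : Fin n → ℝ → ℝ} {i : Fin n}
    (hu : AdmissibleF (u i)) (a b : ℝ) :
    IntervalIntegrable (G.gradJF y0 u i) volume a b :=
  (((hu.intervalIntegrable a b).const_mul _).add
    (((G.continuous_Bhat_dotProduct_mexp_mulVec i _).intervalIntegrable a b).const_mul _)).const_mul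
    2

theorem JF_update_add_smul (y0 : Fin n → ℝ) {u : Fin n → ℝ → ℝ} (hu : ∀ j, AdmissibleF (u j))
    {i : Fin n} (hL : (G.L i).PosSemidef) {w : ℝ → ℝ} (hw : AdmissibleF w) :
    ∃ c, ∀ ε : ℝ, G.JF y0 i (Function.update u i (u i + ε • w)) =
      G.JF y0 i u + ε * (∫ t in (0:ℝ)..G.T, w t * G.gradJF y0 u i t) + ε ^ 2 * c := by
  set y := G.ytraj y0 u G.T
  set z := ∫ s in (0:ℝ)..G.T, w s • mexp ((G.T - s) • G.Λ) *ᵥ G.Bhat i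
  have hLsymm : (G.Lhat i).IsSymm := by
    simpa using (G.posSemidef_Lhat hL).isHermitian
  have hzq : z ⬝ᵥ G.Lhat i *ᵥ y =
      ∫ t in (0:ℝ)..G.T, w t * (G.Bhat i ⬝ᵥ mexp ((G.T - t) • G.Λᵀ) *ᵥ (G.Lhat i *ᵥ y)) := by
    rw [← intervalIntegral_dotProduct_const ((hw.intervalIntegrable 0 G.T).smul_continuousOn
      (continuous_mexp_sub_smul_mulVec G.Λ G.T (G.Bhat i)).continuousOn)]
    refine intervalIntegral.integral_congr fun t _ => ?_
    rw [smul_dotProduct, smul_eq_mul, ← mexp_smul_transpose_s9, dotProduct_mulVec (G.Bhat i),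
      vecMul_transpose]
  have huw := (hu i).intervalIntegrable_mul hw 0 G.T
  have hcost : ∀ ε : ℝ, ∫ t in (0:ℝ)..G.T, G.r i * (u i t + ε * w t) ^ 2 =
      (∫ t in (0:ℝ)..G.T, G.r i * u i t ^ 2) +
        ε * (∫ t in (0:ℝ)..G.T, 2 * G.r i * (u i t * w t)) +
        ε ^ 2 * ∫ t in (0:ℝ)..G.T, G.r i * w t ^ 2 := by
    intro ε
    have huu : IntervalIntegrable (fun t => u i t ^ 2) volume 0 G.T := by
      simpa only [sq] using (hu i).intervalIntegrable_mul (hu i) 0 G.T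
    have hww : IntervalIntegrable (fun t => w t ^ 2) volume 0 G.T := by
      simpa only [sq] using hw.intervalIntegrable_mul hw 0 G.T
    calc ∫ t in (0:ℝ)..G.T, G.r i * (u i t + ε * w t) ^ 2
        = ∫ t in (0:ℝ)..G.T, (G.r i * u i t ^ 2 + ε * (2 * G.r i * (u i t * w t))) +
            ε ^ 2 * (G.r i * w t ^ 2) :=
          intervalIntegral.integral_congr fun t _ => by ring
      _ = _ := by
          rw [intervalIntegral.integral_add ((huu.const_mul _).add ((huw.const_mul _).const_mul _))
              ((hww.const_mul _).const_mul _),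
            intervalIntegral.integral_add (huu.const_mul _) ((huw.const_mul _).const_mul _)]
          simp only [intervalIntegral.integral_const_mul]
  have hgrad : ∫ t in (0:ℝ)..G.T, w t * G.gradJF y0 u i t =
      2 * (1 / G.d i) * (z ⬝ᵥ G.Lhat i *ᵥ y) + ∫ t in (0:ℝ)..G.T, 2 * G.r i * (u i t * w t) := by
    have hwp := (hw.intervalIntegrable 0 G.T).mul_continuousOn
      (G.continuous_Bhat_dotProduct_mexp_mulVec i (G.Lhat i *ᵥ y)).continuousOn
    rw [hzq, ← intervalIntegral.integral_const_mul, ← intervalIntegral.integral_add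
      (hwp.const_mul _) (huw.const_mul _)]
    exact intervalIntegral.integral_congr fun t _ => by simp only [gradJF]; ring
  refine ⟨(1 / G.d i) * (z ⬝ᵥ G.Lhat i *ᵥ z) + ∫ t in (0:ℝ)..G.T, G.r i * w t ^ 2, fun ε => ?_⟩
  simp only [JF, Function.update_self, G.ytraj_update_add_smul y0 hu i hw,
    hLsymm.add_smul_dotProduct_mulVec_add_smul, Pi.add_apply, Pi.smul_apply, smul_eq_mul, hcost,
    hgrad]
  ring

variable {G}

theorem NashF.integral_mul_gradJF_eq_zero {y0 : Fin n → ℝ} {u : Fin n → ℝ → ℝ}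
    (hNash : G.NashF y0 u) {i : Fin n} (hL : (G.L i).PosSemidef) {w : ℝ → ℝ}
    (hw : AdmissibleF w) : ∫ t in (0:ℝ)..G.T, w t * G.gradJF y0 u i t = 0 := by
  obtain ⟨c, hc⟩ := G.JF_update_add_smul y0 hNash.1 hL hw
  refine eq_zero_of_forall_mul_add_sq_mul_nonneg (c := c) fun ε => ?_
  have hle := hNash.2 i _ ((hNash.1 i).add (hw.const_smul ε))
  rw [hc ε] at hle
  linarith

theorem NashF.gradJF_ae_eq_zero {y0 : Fin n → ℝ} {u : Fin n → ℝ → ℝ} (hNash : G.NashF y0 u)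
    (hT : 0 ≤ G.T) {i : Fin n} (hL : (G.L i).PosSemidef) :
    ∀ᵐ t ∂volume.restrict (Set.Icc 0 G.T), G.gradJF y0 u i t = 0 :=
  ae_restrict_Icc_eq_zero_of_forall_integral_indicator_mul hT
    (G.intervalIntegrable_gradJF y0 (hNash.1 i) 0 G.T)
    fun _ hs => hNash.integral_mul_gradJF_eq_zero hL (AdmissibleF.indicator_one hs)

end GameData

/-- Necessity of the Pontryagin condition: if `u` is an open-loop Nash equilibrium of the
delay-free game with trajectory `y* = y_u` from `y₀`, then for every player `i`,
`uᵢ(t) = −(1/(rᵢdᵢ))·B̂ᵢᵀ·exp((T−t)Λᵀ)·L̂ᵢ·y*(T)` for almost every `t ∈ [0,T]`. -/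
theorem statement_9 {n : ℕ} (G : GameData n) (hG : G.Valid) (y0 : Fin n → ℝ)
    (u : Fin n → ℝ → ℝ) (hNash : G.NashF y0 u) :
    ∀ i, ∀ᵐ t ∂(volume.restrict (Set.Icc (0:ℝ) G.T)),
      u i t = -(1 / (G.r i * G.d i)) *
        (G.Bhat i ⬝ᵥ (mexp ((G.T - t) • G.Λᵀ)).mulVec
          ((G.Lhat i).mulVec (G.ytraj y0 u G.T))) := by
  obtain ⟨-, hτ, hr, hd, hL, -⟩ := hG
  intro i
  have hT : 0 ≤ G.T := sub_nonneg.2 hτ.le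
  filter_upwards [hNash.gradJF_ae_eq_zero hT (hL i)] with t ht
  have hr0 := (hr i).ne'
  have hd0 := (hd i).ne'
  simp only [GameData.gradJF] at ht
  field_simp at ht ⊢
  linarith
end
end
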